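/- For every positive integer k and every vector of integers (r_1, ..., r_k), there exists a unique partition μ with non-repeating odd parts whose 2-modular Durfee square size is k, whose 2-modular successive rank vector is (r_1, ..., r_k), and for which σ(μ) is minimal among all partitions with non-repeating odd parts having 2-modular successive rank vector (r_1, ..., r_k). -/

import Mathlib

open Finset
open scoped Classical

namespace BasisPartitions

/-! ### Ordinary partitions -/

/-- The parts of a partition, listed in weakly decreasing order. -/
def sparts {n : ℕ} (π : n.Partition) : List ℕ := π.parts.sort (· ≥ ·)

/-- `conj L j` is the number of parts that are `≥ j`, i.e. the `j`-th part of the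
conjugate partition (for `j ≥ 1`). -/
def conj (L : List ℕ) (j : ℕ) : ℕ := L.countP (fun b => j ≤ b)

/-- The Durfee square size: the largest `k` such that the `k`-th part is `≥ k`. -/
def durfee (L : List ℕ) : ℕ := (List.range L.length).countP (fun i => i + 1 ≤ L.getD i 0)

/-- The `(i+1)`-st successive rank `r_{i+1} = b_{i+1} - c_{i+1}` (0-indexed `i`). -/
def rank (L : List ℕ) (i : ℕ) : ℤ := (L.getD i 0 : ℤ) - (conj L (i + 1) : ℤ)

/-- The successive rank vector `(r_1, ..., r_k)` where `k` is the Durfee square size. -/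
def ranks (L : List ℕ) : List ℤ := (List.range (durfee L)).map (rank L)

/-- A basis partition: the partitioned number is minimal among all partitions having
the same successive rank vector. -/
def IsBasis {n : ℕ} (π : n.Partition) : Prop :=
  ∀ (m : ℕ) (π' : m.Partition), ranks (sparts π') = ranks (sparts π) → n ≤ m

/-- The signature: the number of distinct part sizes below the Durfee square. -/
def sig (L : List ℕ) : ℕ := ((L.drop (durfee L)).dedup).length

/-- `b(n;k)`: the number of basis partitions of `n` with Durfee square size `k`. -/
noncomputable def bCount (n k : ℕ) : ℕ :=
  Nat.card {π : n.Partition // IsBasis π ∧ durfee (sparts π) = k}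

/-- `b(n,k,s)`: the number of basis partitions of `n` with Durfee square size `k`
and signature `s`. -/
noncomputable def bCount3 (n k s : ℕ) : ℕ :=
  Nat.card {π : n.Partition // IsBasis π ∧ durfee (sparts π) = k ∧ sig (sparts π) = s}

/-- `B(n;j)`: the number of basis partitions of `n` with signature `j`. -/
noncomputable def BCount (n j : ℕ) : ℕ :=
  Nat.card {π : n.Partition // IsBasis π ∧ sig (sparts π) = j}

/-- Rogers–Ramanujan condition: exactly `k` parts, consecutive gaps `≥ 2`, last part `≥ 1`. -/
def RR (L : List ℕ) (k : ℕ) : Prop :=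
  L.length = k ∧ (∀ i, i + 1 < k → L.getD (i + 1) 0 + 2 ≤ L.getD i 0) ∧ 1 ≤ L.getD (k - 1) 0

/-- `t(π)` for a Rogers–Ramanujan partition: the number of gaps `> 2`, plus 1 if the
last part is `> 1`. -/
def tRR (L : List ℕ) (k : ℕ) : ℕ :=
  ((Finset.range (k - 1)).filter (fun i => L.getD (i + 1) 0 + 2 < L.getD i 0)).card +
    (if 1 < L.getD (k - 1) 0 then 1 else 0)

/-- Primary condition: exactly `k` parts, each part `≥ k`. -/
def Primary (L : List ℕ) (k : ℕ) : Prop := L.length = k ∧ ∀ x ∈ L, k ≤ x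

/-- `t(π)` for a primary partition: the number of strict descents, plus 1 if the
last part is `> k`. -/
def tP (L : List ℕ) (k : ℕ) : ℕ :=
  ((Finset.range (k - 1)).filter (fun i => L.getD (i + 1) 0 < L.getD i 0)).card +
    (if k < L.getD (k - 1) 0 then 1 else 0)

/-- A complete basis partition: every `j` with `1 ≤ j ≤ k-1` occurs as a part of `π_b`
(a row below the Durfee square) or as a part of `π_r` (a column length strictly to the
right of the Durfee square). -/
def IsComplete {n : ℕ} (π : n.Partition) : Prop :=
  ∀ j : ℕ, 1 ≤ j → j < durfee (sparts π) →
    j ∈ (sparts π).drop (durfee (sparts π)) ∨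
      ∃ c : ℕ, durfee (sparts π) < c ∧ conj (sparts π) c = j

/-- `b_c(n)`: the number of complete basis partitions of `n`. -/
noncomputable def bc (n : ℕ) : ℕ := Nat.card {π : n.Partition // IsBasis π ∧ IsComplete π}

/-! ### Partitions with non-repeating odd parts and their 2-modular graphs -/

/-- Partitions with non-repeating (distinct) odd parts. -/
def Pod {n : ℕ} (π : n.Partition) : Prop := ∀ x, Odd x → π.parts.count x ≤ 1

/-- The size (sum of entries) of the `c`-th column (1-indexed) of the 2-modular graph. -/
def mcolSize (L : List ℕ) (c : ℕ) : ℕ :=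
  (L.map (fun x => if 2 * c ≤ x then 2 else if x = 2 * c - 1 then 1 else 0)).sum

/-- The length (number of entries) of the `c`-th column (1-indexed) of the 2-modular graph. -/
def mcolLen (L : List ℕ) (c : ℕ) : ℕ := L.countP (fun x => 2 * c - 1 ≤ x)

/-- The number of entries in a row of the 2-modular graph recording the part `x`,
namely `⌈x/2⌉`. -/
def mrowLen (x : ℕ) : ℕ := (x + 1) / 2

/-- The 2-modular Durfee square size: the largest `k` with `⌈b_k/2⌉ ≥ k`. -/
def mdurfee (L : List ℕ) : ℕ := (List.range L.length).countP (fun i => 2 * i + 1 ≤ L.getD i 0)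

/-- The `(i+1)`-st 2-modular successive rank: (size of row `i+1`) − (size of column `i+1`). -/
def mrank (L : List ℕ) (i : ℕ) : ℤ := (L.getD i 0 : ℤ) - (mcolSize L (i + 1) : ℤ)

/-- The 2-modular successive rank vector. -/
def mranks (L : List ℕ) : List ℤ := (List.range (mdurfee L)).map (mrank L)

/-- A minimal basis partition in `P_{o,d}`: the partitioned number is minimal among all
partitions with non-repeating odd parts having the same 2-modular successive rank vector. -/
def MinBasis {n : ℕ} (μ : n.Partition) : Prop :=
  Pod μ ∧ ∀ (m : ℕ) (μ' : m.Partition), Pod μ' →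
    mranks (sparts μ') = mranks (sparts μ) → n ≤ m

/-- A basis partition in `P_{o,d}`: no row of the 2-modular graph strictly below the Durfee
square has size equal to the size of a column strictly to the right of the Durfee square. -/
def PodBasis {n : ℕ} (π : n.Partition) : Prop :=
  Pod π ∧ ∀ i, mdurfee (sparts π) ≤ i → i < (sparts π).length →
    ∀ c, mdurfee (sparts π) < c → mcolSize (sparts π) c ≠ (sparts π).getD i 0

/-- The signature of a basis partition in `P_{o,d}`: the number of distinct sizes among the
rows of the 2-modular graph strictly below the Durfee square. -/
def msig (L : List ℕ) : ℕ := ((L.drop (mdurfee L)).dedup).length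

/-- The ℓ-signature: the number of distinct lengths among the rows of the 2-modular
graph strictly below the Durfee square. -/
def lsig (L : List ℕ) : ℕ := (((L.drop (mdurfee L)).map mrowLen).dedup).length

/-- `b(n;j)` for `P_{o,d}`: the number of basis partitions of `n` in `P_{o,d}` with
signature `j`. -/
noncomputable def podB (n j : ℕ) : ℕ := Nat.card {π : n.Partition // PodBasis π ∧ msig (sparts π) = j}

/-- The number of odd parts. -/
def numOdd (L : List ℕ) : ℕ := L.countP (fun x => x % 2 = 1)

/-- A special partition: distinct parts with consecutive differences `≥ 4`, where a
difference equal to `4` is permitted only when both parts are even. -/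
def Special (L : List ℕ) : Prop :=
  ∀ i, i + 1 < L.length →
    L.getD (i + 1) 0 + 4 ≤ L.getD i 0 ∧
      (L.getD i 0 = L.getD (i + 1) 0 + 4 → Even (L.getD i 0) ∧ Even (L.getD (i + 1) 0))

/-- The `i`-th part of a special partition, with the convention that the part just after
the last one is `-2`. -/
def hpart (L : List ℕ) (i : ℕ) : ℤ := if i < L.length then (L.getD i 0 : ℤ) else -2

/-- `ℓ(π)`: the number of gaps `> 4` in a special partition, with the convention
`h_{k+1} = -2`. -/
def ell (L : List ℕ) : ℕ :=
  ((Finset.range L.length).filter (fun i => 4 < hpart L i - hpart L (i + 1))).card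


section Aux15

-- G2: sorted getD anti-monotone
theorem getD_anti {L : List ℕ} (hL : L.Pairwise (· ≥ ·)) {i j : ℕ} (hij : i ≤ j) :
    L.getD j 0 ≤ L.getD i 0 := by
  rcases lt_or_ge j L.length with hj | hj
  · rw [List.getD_eq_getElem _ _ hj, List.getD_eq_getElem _ _ (lt_of_le_of_lt hij hj)]
    rcases eq_or_lt_of_le hij with rfl | hlt
    · exact le_rfl
    · exact List.pairwise_iff_get.mp hL ⟨i, _⟩ ⟨j, _⟩ hlt
  · rw [List.getD_eq_default _ _ hj]; exact Nat.zero_le _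

theorem countP_range_lt (n m : ℕ) : (List.range n).countP (fun i => decide (i < m)) = min m n := by
  induction n with
  | zero => simp
  | succ n ih =>
    rw [List.range_succ, List.countP_append, ih]
    simp only [List.countP_cons, List.countP_nil]
    by_cases h : n < m <;> simp [h] <;> omega

-- G3 forward: mdurfee facts
theorem mdurfee_le_length (L : List ℕ) : mdurfee L ≤ L.length := by
  exact le_trans (List.countP_le_length) (le_of_eq List.length_range)

theorem mdurfee_spec_lt {L : List ℕ} (hL : L.Pairwise (· ≥ ·)) {j : ℕ} (hj : j < mdurfee L) :
    2 * j + 1 ≤ L.getD j 0 := by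
  by_contra hno
  have h1 : mdurfee L ≤ (List.range L.length).countP (fun i => decide (i < j)) := by
    apply List.countP_mono_left
    intro i _ hp
    simp only [decide_eq_true_eq] at *
    by_contra hij
    push_neg at hij
    exact hno (le_trans (by omega) (le_trans hp (getD_anti hL hij)))
  rw [countP_range_lt] at h1
  omega

theorem mdurfee_spec_ge {L : List ℕ} (hL : L.Pairwise (· ≥ ·)) :
    L.getD (mdurfee L) 0 ≤ 2 * (mdurfee L) := by
  set k := mdurfee L with hk
  by_contra hno
  push_neg at hno
  have hlen : k < L.length := by
    by_contra hke
    push_neg at hke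
    rw [List.getD_eq_default _ _ hke] at hno; omega
  have h1 : (List.range L.length).countP (fun i => decide (i < k + 1)) ≤ mdurfee L := by
    apply List.countP_mono_left
    intro i hi hp
    simp only [decide_eq_true_eq] at *
    have : L.getD k 0 ≤ L.getD i 0 := getD_anti hL (by omega)
    omega
  rw [countP_range_lt] at h1
  omega

-- G3 backward: compute mdurfee
theorem mdurfee_eq {L : List ℕ} {k : ℕ} (hlen : k ≤ L.length)
    (h1 : ∀ j, j < k → 2 * j + 1 ≤ L.getD j 0) (h2 : L.getD k 0 ≤ 2 * k)
    (hL : L.Pairwise (· ≥ ·)) : mdurfee L = k := by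
  have : ∀ i ∈ List.range L.length,
      (decide (2 * i + 1 ≤ L.getD i 0)) = (decide (i < k)) := by
    intro i _
    rw [decide_eq_decide]
    by_cases hik : i < k
    · exact iff_of_true (h1 i hik) hik
    · push_neg at hik
      have h3 : L.getD i 0 ≤ L.getD k 0 := getD_anti hL hik
      exact iff_of_false (by omega) (by omega)
  rw [mdurfee, List.countP_congr (by intro a ha; rw [this a ha]), countP_range_lt]
  omega


-- Lemma A: column size via counts
theorem mcolSize_eq_counts (l : List ℕ) (c : ℕ) (hc : 1 ≤ c) :
    mcolSize l c = 2 * l.countP (fun x => decide (2 * c ≤ x)) + l.count (2 * c - 1) := by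
  induction l with
  | nil => simp [mcolSize]
  | cons x t ih =>
    rw [mcolSize, List.map_cons, List.sum_cons, ← mcolSize, ih, List.countP_cons,
      List.count_cons]
    simp only [decide_eq_true_eq, beq_iff_eq]
    split_ifs <;> omega

-- Lemma B: countP telescoping at odd value
theorem countP_succ_odd (l : List ℕ) (c : ℕ) :
    l.countP (fun x => decide (2 * c + 1 ≤ x)) =
      l.countP (fun x => decide (2 * c + 2 ≤ x)) + l.count (2 * c + 1) := by
  induction l with
  | nil => simp
  | cons x t ih =>
    rw [List.countP_cons, List.countP_cons, List.count_cons, ih]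
    simp only [decide_eq_true_eq, beq_iff_eq]
    split_ifs <;> omega

-- countP monotone in the threshold
theorem countP_ge_anti (l : List ℕ) {a b : ℕ} (hab : a ≤ b) :
    l.countP (fun x => decide (b ≤ x)) ≤ l.countP (fun x => decide (a ≤ x)) := by
  apply List.countP_mono_left
  intro x _ h
  simp only [decide_eq_true_eq] at *
  omega

-- row sum for a single small part
theorem row_sum_single (k x : ℕ) (h1 : 1 ≤ x) (h2 : x ≤ 2 * k) :
    ∑ c ∈ Finset.range k, (if 2 * (c + 1) ≤ x then 2 else if x = 2 * (c + 1) - 1 then 1 else 0)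
      = x := by
  induction k with
  | zero => omega
  | succ n ih =>
    rw [Finset.sum_range_succ]
    by_cases hx : x ≤ 2 * n
    · rw [ih hx]
      have hA : ¬ (2 * (n + 1) ≤ x) := by omega
      have hB : ¬ (x = 2 * (n + 1) - 1) := by omega
      simp [hA, hB]
    · -- x = 2n+1 or 2n+2
      have hsum : ∀ m, (∀ c, c < m → (if 2 * (c + 1) ≤ x then (2:ℕ) else if x = 2 * (c + 1) - 1 then 1 else 0) = 2) →
          ∑ c ∈ Finset.range m, (if 2 * (c + 1) ≤ x then (2:ℕ) else if x = 2 * (c + 1) - 1 then 1 else 0) = 2 * m := by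
        intro m hm
        rw [Finset.sum_congr rfl (fun c hc => hm c (Finset.mem_range.mp hc))]
        simp [mul_comm]
      have hall : ∀ c, c < n → (if 2 * (c + 1) ≤ x then (2:ℕ) else if x = 2 * (c + 1) - 1 then 1 else 0) = 2 := by
        intro c hc
        have : 2 * (c + 1) ≤ x := by omega
        simp [this]
      rw [hsum n hall]
      by_cases he : 2 * (n + 1) ≤ x
      · rw [if_pos he]; omega
      · rw [if_neg he, if_pos (show x = 2 * (n + 1) - 1 by omega)]
        omega

-- F8: sum of parts = sum of column sizes, when all parts in [1, 2k]
theorem sum_eq_sum_mcolSize {l : List ℕ} {k : ℕ} (h : ∀ x ∈ l, 1 ≤ x ∧ x ≤ 2 * k) :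
    l.sum = ∑ c ∈ Finset.range k, mcolSize l (c + 1) := by
  induction l with
  | nil => simp [mcolSize]
  | cons x t ih =>
    have hx := h x (List.mem_cons_self)
    have hsplit : ∀ c : ℕ, mcolSize (x :: t) (c+1) =
        (if 2 * (c + 1) ≤ x then 2 else if x = 2 * (c + 1) - 1 then 1 else 0) + mcolSize t (c+1) := by
      intro c; rw [mcolSize, List.map_cons, List.sum_cons]; rfl
    rw [List.sum_cons, ih (fun y hy => h y (List.mem_cons_of_mem x hy)),
      Finset.sum_congr rfl (fun c _ => hsplit c), Finset.sum_add_distrib,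
      row_sum_single k x hx.1 hx.2]

-- two adjacent equal entries give count ≥ 2
theorem two_le_count_of_adj {L : List ℕ} {j : ℕ} (hj : j + 1 < L.length)
    (hv : L.getD j 0 = L.getD (j+1) 0) : 2 ≤ L.count (L.getD j 0) := by
  have hjl : j < L.length := by omega
  have hd1 : L.drop j = L.getD j 0 :: L.drop (j+1) := by
    rw [List.getD_eq_getElem _ _ hjl]
    exact List.drop_eq_getElem_cons hjl
  have hd2 : L.drop (j+1) = L.getD (j+1) 0 :: L.drop (j+2) := by
    rw [List.getD_eq_getElem _ _ hj]
    exact List.drop_eq_getElem_cons hj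
  have : 2 ≤ (L.drop j).count (L.getD j 0) := by
    rw [hd1, hd2, ← hv]
    simp [List.count_cons]
  exact le_trans this (List.Sublist.count_le _ (List.drop_sublist j L))

-- mcolSize append
theorem mcolSize_append (l1 l2 : List ℕ) (c : ℕ) :
    mcolSize (l1 ++ l2) c = mcolSize l1 c + mcolSize l2 c := by
  simp [mcolSize]


-- generic: countP at threshold m = countP at m+1 + count m
theorem countP_ge_succ_count (l : List ℕ) (m : ℕ) :
    l.countP (fun x => decide (m ≤ x)) = l.countP (fun x => decide (m + 1 ≤ x)) + l.count m := by
  induction l with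
  | nil => simp
  | cons x t ih =>
    rw [List.countP_cons, List.countP_cons, List.count_cons, ih]
    simp only [decide_eq_true_eq, beq_iff_eq]
    split_ifs <;> omega

theorem list_sum_eq_sum_getD (M : List ℕ) :
    M.sum = ∑ i ∈ Finset.range M.length, M.getD i 0 := by
  induction M with
  | nil => simp
  | cons x t ih =>
    rw [List.sum_cons, ih, List.length_cons, Finset.sum_range_succ']
    simp only [List.getD_cons_succ, List.getD_cons_zero]
    omega

-- head columns: all parts ≥ 2k-1
theorem mcolSize_head_lt {l : List ℕ} {k c : ℕ} (hc : 1 ≤ c) (hck : c < k)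
    (h : ∀ x ∈ l, 2 * k - 1 ≤ x) : mcolSize l c = 2 * l.length := by
  induction l with
  | nil => simp [mcolSize]
  | cons x t ih =>
    have hx := h x (List.mem_cons_self)
    rw [mcolSize, List.map_cons, List.sum_cons, ← mcolSize,
      ih (fun y hy => h y (List.mem_cons_of_mem x hy)), List.length_cons]
    rw [if_pos (show 2 * c ≤ x by omega)]
    ring

theorem mcolSize_head_k {l : List ℕ} {k : ℕ} (hk : 1 ≤ k)
    (h : ∀ x ∈ l, 2 * k - 1 ≤ x) : mcolSize l k + l.count (2 * k - 1) = 2 * l.length := by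
  induction l with
  | nil => simp [mcolSize]
  | cons x t ih =>
    have hx := h x (List.mem_cons_self)
    have iht := ih (fun y hy => h y (List.mem_cons_of_mem x hy))
    rw [mcolSize, List.map_cons, List.sum_cons, ← mcolSize, List.count_cons, List.length_cons]
    simp only [beq_iff_eq]
    split_ifs <;> omega

section Forward
variable {L : List ℕ} {k : ℕ}

-- basic head facts
theorem head_ge (hs : L.Pairwise (· ≥ ·)) (hdur : mdurfee L = k) {j : ℕ} (hj : j < k) :
    2 * k - 1 ≤ L.getD j 0 := by
  have h1 : 2 * (k-1) + 1 ≤ L.getD (k-1) 0 := mdurfee_spec_lt hs (by omega)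
  have h2 : L.getD (k-1) 0 ≤ L.getD j 0 := getD_anti hs (by omega)
  omega

theorem mem_take_ge (hs : L.Pairwise (· ≥ ·)) (hdur : mdurfee L = k) {x : ℕ}
    (hx : x ∈ L.take k) : 2 * k - 1 ≤ x := by
  obtain ⟨i, hi, hxi⟩ := List.mem_iff_getElem.mp hx
  have hik : i < k := by simpa using lt_of_lt_of_le hi (by simp)
  simp only [List.getElem_take] at hxi
  have hL : L.getD i 0 = x := by
    rw [List.getD_eq_getElem _ _ (by have := hi; simp at this; omega), hxi]
  rw [← hL]
  exact head_ge hs hdur hik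

theorem mem_drop_le (hs : L.Pairwise (· ≥ ·)) (hdur : mdurfee L = k) {x : ℕ}
    (hx : x ∈ L.drop k) : x ≤ 2 * k := by
  obtain ⟨i, hi, hxi⟩ := List.mem_iff_getElem.mp hx
  rw [List.getElem_drop] at hxi
  have h1 : L.getD (k + i) 0 = x := by
    rw [List.getD_eq_getElem _ _ (by have := hi; simp at this; omega), hxi]
  have h2 : L.getD (k + i) 0 ≤ L.getD k 0 := getD_anti hs (by omega)
  have h3 := mdurfee_spec_ge hs
  rw [hdur] at h3
  omega

theorem mem_drop_le' (hs : L.Pairwise (· ≥ ·)) {x : ℕ} (hk : 1 ≤ k)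
    (hx : x ∈ L.drop k) : x ≤ L.getD (k-1) 0 := by
  obtain ⟨i, hi, hxi⟩ := List.mem_iff_getElem.mp hx
  rw [List.getElem_drop] at hxi
  have h1 : L.getD (k + i) 0 = x := by
    rw [List.getD_eq_getElem _ _ (by have := hi; simp at this; omega), hxi]
  have h2 : L.getD (k + i) 0 ≤ L.getD (k-1) 0 := getD_anti hs (by omega)
  omega


theorem mem_take_getD (hk : k ≤ L.length) {x : ℕ} (hx : x ∈ L.take k) :
    ∃ i, i < k ∧ L.getD i 0 = x := by
  obtain ⟨i, hi, hxi⟩ := List.mem_iff_getElem.mp hx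
  have hik : i < k := by simpa using lt_of_lt_of_le hi (by simp)
  simp only [List.getElem_take] at hxi
  exact ⟨i, hik, by rw [List.getD_eq_getElem _ _ (by omega), hxi]⟩

theorem getD_take (hk : k ≤ L.length) {i : ℕ} (hi : i < k) :
    (L.take k).getD i 0 = L.getD i 0 := by
  rw [List.getD_eq_getElem _ _ (by simp; omega), List.getD_eq_getElem _ _ (by omega)]
  simp [List.getElem_take]

end Forward

section Config

variable {k : ℕ} {r : Fin k → ℤ}

/-- extension of the rank vector to all of ℕ -/
def rr (k : ℕ) (r : Fin k → ℤ) (j : ℕ) : ℤ := if h : j < k then r ⟨j, h⟩ else 0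

/-- the column sizes of the part of the 2-modular diagram below the Durfee square -/
def gfun (L : List ℕ) (k c : ℕ) : ℕ := mcolSize (L.drop k) (c + 1)

/-- whether `2k-1` occurs as one of the first `k` parts -/
def ofun (L : List ℕ) (k : ℕ) : ℕ := (L.take k).count (2 * k - 1)

variable {L : List ℕ}

theorem length_take_k (hdur : mdurfee L = k) : (L.take k).length = k := by
  have := mdurfee_le_length L
  rw [hdur] at this
  simp [this]

theorem F_col (hs : L.Pairwise (· ≥ ·)) (hdur : mdurfee L = k) (hk : 0 < k)
    {j : ℕ} (hj : j < k) :
    mcolSize L (j + 1) + (if j = k - 1 then ofun L k else 0) = 2 * k + gfun L k j := by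
  have hlen := mdurfee_le_length L
  rw [hdur] at hlen
  have hsplit := mcolSize_append (L.take k) (L.drop k) (j + 1)
  rw [List.take_append_drop] at hsplit
  have hmem : ∀ x ∈ L.take k, 2 * k - 1 ≤ x := fun x hx => mem_take_ge hs hdur hx
  have hlt : (L.take k).length = k := length_take_k hdur
  by_cases hjk : j = k - 1
  · have hkk : j + 1 = k := by omega
    have hhd := mcolSize_head_k (l := L.take k) (k := k) hk hmem
    rw [hlt] at hhd
    have e1 : mcolSize (L.take k) (j+1) = mcolSize (L.take k) k := by rw [hkk]
    have e2 : gfun L k j = mcolSize (L.drop k) k := by rw [gfun, hkk]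
    have e3 : mcolSize (L.drop k) (j+1) = mcolSize (L.drop k) k := by rw [hkk]
    rw [hsplit, if_pos hjk, e1, e2, e3, ofun]
    omega
  · have h1 : mcolSize (L.take k) (j + 1) = 2 * (L.take k).length :=
      mcolSize_head_lt (by omega) (by omega) hmem
    rw [hsplit, if_neg hjk, h1, hlt, gfun]
    omega

theorem F_beq (hs : L.Pairwise (· ≥ ·)) (hdur : mdurfee L = k) (hk : 0 < k)
    (hrk : ∀ j, j < k → mrank L j = rr k r j) {j : ℕ} (hj : j < k) :
    (L.getD j 0 : ℤ) + (if j = k - 1 then (ofun L k : ℤ) else 0) =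
      rr k r j + 2 * k + gfun L k j := by
  have h1 := hrk j hj
  rw [mrank] at h1
  have h2 := F_col hs hdur hk hj
  by_cases hjk : j = k - 1
  · rw [if_pos hjk] at h2 ⊢; omega
  · rw [if_neg hjk] at h2 ⊢; omega

theorem F_o01 (hodd : ∀ x, x % 2 = 1 → L.count x ≤ 1) (hk : 0 < k) : ofun L k ≤ 1 := by
  have h1 : (L.take k).count (2 * k - 1) ≤ L.count (2 * k - 1) :=
    List.Sublist.count_le _ (List.take_sublist k L)
  have h2 := hodd (2 * k - 1) (by omega)
  rw [ofun]
  omega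

theorem F_bk1 (hs : L.Pairwise (· ≥ ·)) (hdur : mdurfee L = k) (hk : 0 < k)
    (ho : ofun L k = 1) : L.getD (k - 1) 0 = 2 * k - 1 := by
  have hlen := mdurfee_le_length L
  rw [hdur] at hlen
  have hmem : (2 * k - 1) ∈ L.take k := by
    rw [← List.count_pos_iff]
    rw [ofun] at ho
    omega
  obtain ⟨i, hik, hi⟩ := mem_take_getD hlen hmem
  have h1 : L.getD (k - 1) 0 ≤ L.getD i 0 := getD_anti hs (by omega)
  have h2 := head_ge hs hdur (show k - 1 < k by omega)
  omega

theorem F_o1 (hs : L.Pairwise (· ≥ ·)) (hdur : mdurfee L = k) (hk : 0 < k)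
    (hodd : ∀ x, x % 2 = 1 → L.count x ≤ 1)
    (hrk : ∀ j, j < k → mrank L j = rr k r j)
    (ho : ofun L k = 1) : rr k r (k - 1) = 0 ∧ gfun L k (k - 1) = 0 := by
  have hlen := mdurfee_le_length L
  rw [hdur] at hlen
  have hbk := F_bk1 hs hdur hk ho
  -- tail has no elements ≥ 2k
  have htl1 : (L.drop k).countP (fun x => decide (2 * k ≤ x)) = 0 := by
    rw [List.countP_eq_zero]
    intro x hx
    have := mem_drop_le' hs hk hx
    simp only [decide_eq_true_eq]
    omega
  have htl2 : (L.drop k).count (2 * k - 1) = 0 := by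
    have hcnt := hodd (2 * k - 1) (by omega)
    have : L.count (2 * k - 1) = (L.take k).count (2*k-1) + (L.drop k).count (2*k-1) := by
      conv_lhs => rw [← List.take_append_drop k L]
      rw [List.count_append]
    rw [ofun] at ho
    omega
  have hg : gfun L k (k - 1) = 0 := by
    have hd : k - 1 + 1 = k := by omega
    rw [gfun, hd, mcolSize_eq_counts _ _ hk, htl1, htl2]
  have hbeq := F_beq hs hdur hk hrk (show k - 1 < k by omega)
  rw [if_pos rfl, hg, ho, hbk] at hbeq
  constructor
  · push_cast at hbeq; omega
  · exact hg

theorem F_o0 (hs : L.Pairwise (· ≥ ·)) (hdur : mdurfee L = k) (hk : 0 < k)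
    (hrk : ∀ j, j < k → mrank L j = rr k r j)
    (ho : ofun L k = 0) : 0 ≤ rr k r (k - 1) + (gfun L k (k - 1) : ℤ) := by
  have hlen := mdurfee_le_length L
  rw [hdur] at hlen
  have hne : L.getD (k - 1) 0 ≠ 2 * k - 1 := by
    intro heq
    have hmem : (2 * k - 1) ∈ L.take k := by
      rw [← heq, ← getD_take hlen (show k - 1 < k by omega)]
      have : k - 1 < (L.take k).length := by rw [length_take_k hdur]; omega
      rw [List.getD_eq_getElem _ _ this]
      exact List.getElem_mem _
    rw [ofun, List.count_eq_zero] at ho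
    exact ho hmem
  have h2 := head_ge hs hdur (show k - 1 < k by omega)
  have hbeq := F_beq hs hdur hk hrk (show k - 1 < k by omega)
  rw [if_pos rfl, ho] at hbeq
  push_cast at hbeq
  omega


theorem F_H (hs : L.Pairwise (· ≥ ·)) (hdur : mdurfee L = k) (hk : 0 < k)
    (hodd : ∀ x, x % 2 = 1 → L.count x ≤ 1)
    (hrk : ∀ j, j < k → mrank L j = rr k r j) {j : ℕ} (hj : j + 1 < k) :
    (gfun L k (j+1) : ℤ) + rr k r (j+1) - rr k r j - (if j = k - 2 then (ofun L k : ℤ) else 0)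
      ≤ gfun L k j ∧
    ((gfun L k j : ℤ) = (gfun L k (j+1) : ℤ) + rr k r (j+1) - rr k r j
        - (if j = k - 2 then (ofun L k : ℤ) else 0) →
      ((gfun L k j : ℤ) + rr k r j) % 2 = 0) := by
  have hlen := mdurfee_le_length L
  rw [hdur] at hlen
  have hb1 := F_beq hs hdur hk hrk (show j < k by omega)
  have hb2 := F_beq hs hdur hk hrk (show j + 1 < k by omega)
  rw [if_neg (show j ≠ k - 1 by omega)] at hb1
  have hind : (if j + 1 = k - 1 then (ofun L k : ℤ) else 0) =
      (if j = k - 2 then (ofun L k : ℤ) else 0) := by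
    by_cases h : j + 1 = k - 1
    · rw [if_pos h, if_pos (by omega)]
    · rw [if_neg h, if_neg (by omega)]
  rw [hind] at hb2
  have hmono : L.getD (j+1) 0 ≤ L.getD j 0 := getD_anti hs (by omega)
  constructor
  · omega
  · intro heq
    have hbeq : L.getD j 0 = L.getD (j+1) 0 := by omega
    have hcnt := two_le_count_of_adj (show j + 1 < L.length by omega) hbeq
    have heven : L.getD j 0 % 2 = 0 := by
      by_contra hoddv
      have := hodd (L.getD j 0) (by omega)
      omega
    omega

theorem tail_count_odd_le_one (hodd : ∀ x, x % 2 = 1 → L.count x ≤ 1) {m : ℕ}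
    (hm : m % 2 = 1) : (L.drop k).count m ≤ 1 :=
  le_trans (List.Sublist.count_le m (List.drop_sublist k L)) (hodd m hm)

theorem countP_thresh_congr (l : List ℕ) {a b : ℕ} (h : a = b) :
    l.countP (fun x => decide (a ≤ x)) = l.countP (fun x => decide (b ≤ x)) := by subst h; rfl

-- decomposition of tail column c+1 (0-indexed c)
theorem gfun_decomp (L : List ℕ) (k c : ℕ) :
    gfun L k c = 2 * (L.drop k).countP (fun x => decide (2 * c + 2 ≤ x))
      + (L.drop k).count (2 * c + 1) := by
  have h := mcolSize_eq_counts (L.drop k) (c + 1) (by omega)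
  have e1 : 2 * (c + 1) = 2 * c + 2 := by ring
  have e2 : 2 * (c + 1) - 1 = 2 * c + 1 := by omega
  rw [gfun, h, List.countP_congr (fun a _ => by rw [e1]), e2]

theorem F_R1 (hodd : ∀ x, x % 2 = 1 → L.count x ≤ 1) {j : ℕ} :
    (gfun L k (j+1) + 1) / 2 ≤ gfun L k j / 2 := by
  have h1 := gfun_decomp L k j
  have h2 := gfun_decomp L k (j+1)
  have e1 : 2 * (j + 1) + 2 = 2 * j + 4 := by ring
  have e2 : 2 * (j + 1) + 1 = 2 * j + 3 := by ring
  rw [List.countP_congr (fun a _ => by rw [e1]), e2] at h2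
  have hc1 := tail_count_odd_le_one (k := k) hodd (show (2*j+1) % 2 = 1 by omega)
  have hc3 := tail_count_odd_le_one (k := k) hodd (show (2*j+3) % 2 = 1 by omega)
  have hB := countP_ge_succ_count (L.drop k) (2 * j + 3)
  rw [countP_thresh_congr (L.drop k) (a := 2*j+3+1) (b := 2*j+4) (by omega)] at hB
  have hmono : (L.drop k).countP (fun x => decide (2*j+3 ≤ x)) ≤
      (L.drop k).countP (fun x => decide (2*j+2 ≤ x)) := countP_ge_anti _ (by omega)
  omega

theorem F_counts (hodd : ∀ x, x % 2 = 1 → L.count x ≤ 1) {c : ℕ} :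
    (L.drop k).count (2*c+1) = gfun L k c % 2 ∧
    (L.drop k).count (2*c+2) + (gfun L k (c+1) + 1) / 2 = gfun L k c / 2 := by
  have h1 := gfun_decomp L k c
  have h2 := gfun_decomp L k (c+1)
  have e1 : 2 * (c + 1) + 2 = 2 * c + 4 := by ring
  have e2 : 2 * (c + 1) + 1 = 2 * c + 3 := by ring
  rw [List.countP_congr (fun a _ => by rw [e1]), e2] at h2
  have hc1 := tail_count_odd_le_one (k := k) hodd (show (2*c+1) % 2 = 1 by omega)
  have hc3 := tail_count_odd_le_one (k := k) hodd (show (2*c+3) % 2 = 1 by omega)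
  have hB2 := countP_ge_succ_count (L.drop k) (2 * c + 2)
  rw [countP_thresh_congr (L.drop k) (a := 2*c+2+1) (b := 2*c+3) (by omega)] at hB2
  have hB3 := countP_ge_succ_count (L.drop k) (2 * c + 3)
  rw [countP_thresh_congr (L.drop k) (a := 2*c+3+1) (b := 2*c+4) (by omega)] at hB3
  omega

theorem F_gk (hs : L.Pairwise (· ≥ ·)) (hdur : mdurfee L = k) {c : ℕ} (hc : k ≤ c) :
    gfun L k c = 0 := by
  rw [gfun_decomp]
  have h1 : (L.drop k).countP (fun x => decide (2 * c + 2 ≤ x)) = 0 := by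
    rw [List.countP_eq_zero]
    intro x hx
    have := mem_drop_le hs hdur hx
    simp only [decide_eq_true_eq]
    omega
  have h2 : (L.drop k).count (2 * c + 1) = 0 := by
    rw [List.count_eq_zero]
    intro hmem
    have := mem_drop_le hs hdur hmem
    omega
  omega

theorem F_sumg (hs : L.Pairwise (· ≥ ·)) (hdur : mdurfee L = k)
    (hpos : ∀ x ∈ L, 0 < x) :
    (L.drop k).sum = ∑ c ∈ Finset.range k, gfun L k c := by
  exact sum_eq_sum_mcolSize (fun x hx =>
    ⟨hpos x (List.mem_of_mem_drop hx), mem_drop_le hs hdur hx⟩)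

theorem F_sum (hs : L.Pairwise (· ≥ ·)) (hdur : mdurfee L = k) (hk : 0 < k)
    (hpos : ∀ x ∈ L, 0 < x)
    (hrk : ∀ j, j < k → mrank L j = rr k r j) :
    (L.sum : ℤ) = (∑ j ∈ Finset.range k, rr k r j) + 2 * k * k - ofun L k
      + 2 * (L.drop k).sum := by
  have hlen := mdurfee_le_length L
  rw [hdur] at hlen
  have hsplit : L.sum = (L.take k).sum + (L.drop k).sum := by
    conv_lhs => rw [← List.take_append_drop k L]
    rw [List.sum_append]
  have htk : (L.take k).sum = ∑ i ∈ Finset.range k, L.getD i 0 := by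
    rw [list_sum_eq_sum_getD, length_take_k hdur]
    exact Finset.sum_congr rfl (fun i hi => getD_take hlen (Finset.mem_range.mp hi))
  have hbig : ∑ i ∈ Finset.range k, ((L.getD i 0 : ℤ) + (if i = k - 1 then (ofun L k : ℤ) else 0))
      = ∑ i ∈ Finset.range k, (rr k r i + 2 * k + gfun L k i) := by
    exact Finset.sum_congr rfl (fun i hi => F_beq hs hdur hk hrk (Finset.mem_range.mp hi))
  rw [Finset.sum_add_distrib] at hbig
  have hite : ∑ i ∈ Finset.range k, (if i = k - 1 then (ofun L k : ℤ) else 0) = ofun L k := by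
    rw [Finset.sum_ite_eq' (Finset.range k) (k-1) (fun _ => (ofun L k : ℤ))]
    rw [if_pos (Finset.mem_range.mpr (by omega))]
  rw [hite] at hbig
  have hrhs : ∑ i ∈ Finset.range k, (rr k r i + 2 * (k:ℤ) + gfun L k i) =
      (∑ j ∈ Finset.range k, rr k r j) + 2 * k * k + ∑ i ∈ Finset.range k, (gfun L k i : ℤ) := by
    rw [Finset.sum_add_distrib, Finset.sum_add_distrib, Finset.sum_const, Finset.card_range]
    push_cast
    ring
  rw [hrhs] at hbig
  have hgs := F_sumg hs hdur hpos
  have hcast : ((L.drop k).sum : ℤ) = ∑ c ∈ Finset.range k, (gfun L k c : ℤ) := by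
    rw [hgs]; push_cast; ring
  have hcast2 : ((L.take k).sum : ℤ) = ∑ i ∈ Finset.range k, (L.getD i 0 : ℤ) := by
    rw [htk]; push_cast; ring
  have hLsum : (L.sum : ℤ) = ((L.take k).sum : ℤ) + ((L.drop k).sum : ℤ) := by
    rw [hsplit]; push_cast; ring
  rw [hLsum, hcast2, hcast]
  linarith [hbig]

end Config

section Canon

/-- indicator that the minimal partition ends its Durfee square with row `2k-1` -/
def ohat (k : ℕ) (r : Fin k → ℤ) : ℕ := if rr k r (k-1) = 0 then 1 else 0

/-- the lower bound for `g j` coming from weak decrease of rows `j, j+1` -/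
def hbZ (k : ℕ) (r : Fin k → ℤ) (j x : ℕ) : ℤ :=
  (x : ℤ) + rr k r (j+1) - rr k r j - (if j = k - 2 then (ohat k r : ℤ) else 0)

def mval (k : ℕ) (r : Fin k → ℤ) (j x : ℕ) : ℕ := max (x + x % 2) (hbZ k r j x).toNat

/-- one step of the greedy construction of the minimal tail column sizes -/
def stepf (k : ℕ) (r : Fin k → ℤ) (j x : ℕ) : ℕ :=
  if (mval k r j x : ℤ) = hbZ k r j x ∧ ((mval k r j x : ℤ) + rr k r j) % 2 ≠ 0
  then mval k r j x + 1 else mval k r j x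

def gAux (k : ℕ) (r : Fin k → ℤ) : ℕ → ℕ
  | 0 => (-(rr k r (k-1))).toNat
  | i + 1 => stepf k r (k - 2 - i) (gAux k r i)

/-- the canonical (minimal) tail column sizes -/
def ghat (k : ℕ) (r : Fin k → ℤ) (j : ℕ) : ℕ := if j < k then gAux k r (k - 1 - j) else 0

variable {k : ℕ} {r : Fin k → ℤ}

theorem ghat_last (hk : 0 < k) : ghat k r (k-1) = (-(rr k r (k-1))).toNat := by
  rw [ghat, if_pos (by omega)]
  have : k - 1 - (k-1) = 0 := by omega
  rw [this, gAux]

theorem ghat_step {j : ℕ} (hj : j + 1 < k) : ghat k r j = stepf k r j (ghat k r (j+1)) := by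
  rw [ghat, if_pos (by omega), ghat, if_pos (by omega)]
  have h1 : k - 1 - j = (k - 2 - j) + 1 := by omega
  have h2 : k - 1 - (j + 1) = k - 2 - j := by omega
  rw [h1, h2, gAux]
  have h3 : k - 2 - (k - 2 - j) = j := by omega
  rw [h3]

theorem stepf_ge_hb (j x : ℕ) : hbZ k r j x ≤ stepf k r j x := by
  rw [stepf]
  have h1 : hbZ k r j x ≤ (mval k r j x : ℤ) := by
    rw [mval]
    have := Int.self_le_toNat (hbZ k r j x)
    push_cast
    omega
  split_ifs <;> push_cast <;> omega

theorem stepf_ge_r1 (j x : ℕ) : x + x % 2 ≤ stepf k r j x := by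
  rw [stepf, mval]
  split_ifs <;> omega

theorem stepf_parity (j x : ℕ) (heq : (stepf k r j x : ℤ) = hbZ k r j x) :
    ((stepf k r j x : ℤ) + rr k r j) % 2 = 0 := by
  rw [stepf] at heq ⊢
  split_ifs at heq ⊢ with hc
  · exfalso
    obtain ⟨h1, h2⟩ := hc
    rw [← h1] at heq
    push_cast at heq
    omega
  · rw [not_and_or] at hc
    rcases hc with hc | hc
    · exact absurd heq hc
    · rw [not_not] at hc; exact hc

-- canonical config satisfies its own constraints
theorem ghat_H {j : ℕ} (hj : j + 1 < k) :
    hbZ k r j (ghat k r (j+1)) ≤ ghat k r j ∧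
      ((ghat k r j : ℤ) = hbZ k r j (ghat k r (j+1)) →
        ((ghat k r j : ℤ) + rr k r j) % 2 = 0) := by
  rw [ghat_step hj]
  exact ⟨stepf_ge_hb _ _, stepf_parity _ _⟩

theorem ghat_R1 {j : ℕ} (hj : j + 1 < k) :
    (ghat k r (j+1) + 1) / 2 ≤ ghat k r j / 2 := by
  have := stepf_ge_r1 (k := k) (r := r) j (ghat k r (j+1))
  rw [← ghat_step hj] at this
  omega

theorem ghat_R1' (j : ℕ) (hk : 0 < k) : (ghat k r (j+1) + 1) / 2 ≤ ghat k r j / 2 := by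
  by_cases hj : j + 1 < k
  · exact ghat_R1 hj
  · have h1 : ghat k r (j+1) = 0 := by rw [ghat, if_neg (by omega)]
    rw [h1]
    omega

theorem ohat_le_one : ohat k r ≤ 1 := by rw [ohat]; split_ifs <;> omega

theorem ghat_base1 (hk : 0 < k) (h : ohat k r = 1) :
    rr k r (k-1) = 0 ∧ ghat k r (k-1) = 0 := by
  rw [ohat] at h
  by_cases h0 : rr k r (k-1) = 0
  · exact ⟨h0, by rw [ghat_last hk, h0]; simp⟩
  · rw [if_neg h0] at h; omega

theorem ghat_base (hk : 0 < k) : 0 ≤ rr k r (k-1) + (ghat k r (k-1) : ℤ) := by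
  rw [ghat_last hk]
  have := Int.self_le_toNat (-(rr k r (k-1)))
  push_cast
  omega

/-- The key pointwise minimality lemma: any valid configuration dominates `ghat`. -/
theorem pointwise (hk : 0 < k) (g : ℕ → ℕ) (o : ℕ) (ho01 : o ≤ 1)
    (ho1 : o = 1 → rr k r (k-1) = 0 ∧ g (k-1) = 0)
    (ho0 : o = 0 → 0 ≤ rr k r (k-1) + (g (k-1) : ℤ))
    (hH : ∀ j, j + 1 < k →
      ((g (j+1) : ℤ) + rr k r (j+1) - rr k r j - (if j = k - 2 then (o : ℤ) else 0) ≤ g j ∧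
       ((g j : ℤ) = (g (j+1) : ℤ) + rr k r (j+1) - rr k r j - (if j = k - 2 then (o:ℤ) else 0) →
        ((g j : ℤ) + rr k r j) % 2 = 0)))
    (hR1 : ∀ j, j + 1 < k → (g (j+1) + 1) / 2 ≤ g j / 2) :
    ∀ j, j < k → ghat k r j ≤ g j := by
  have holeo : o ≤ ohat k r := by
    rw [ohat]
    split_ifs with h0
    · exact ho01
    · rcases Nat.eq_zero_or_pos o with h | h
      · omega
      · exact absurd (ho1 (by omega)).1 h0
  have base : ghat k r (k-1) ≤ g (k-1) := by
    rw [ghat_last hk]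
    rcases Nat.eq_zero_or_pos o with h | h
    · have := ho0 h
      omega
    · have h2 := (ho1 (by omega)).1
      rw [h2]
      simp
  have main : ∀ d j, j + d = k - 1 → ghat k r j ≤ g j := by
    intro d
    induction d with
    | zero =>
      intro j hj
      have : j = k - 1 := by omega
      rw [this]; exact base
    | succ n ih =>
      intro j hj
      have hjk : j + 1 < k := by omega
      have hgh : ghat k r (j+1) ≤ g (j+1) := ih (j+1) (by omega)
      rw [ghat_step hjk]
      obtain ⟨hHle, hHpar⟩ := hH j hjk
      have hR := hR1 j hjk
      -- abbreviations
      set x := ghat k r (j+1) with hxdef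
      set z := g (j+1) with hzdef
      set y := g j with hydef
      have hbmono : hbZ k r j x ≤ (z : ℤ) + rr k r (j+1) - rr k r j
          - (if j = k - 2 then (o : ℤ) else 0) := by
        rw [hbZ]
        have : (if j = k - 2 then (o:ℤ) else 0) ≤ (if j = k - 2 then (ohat k r:ℤ) else 0) := by
          split_ifs
          · exact_mod_cast holeo
          · exact le_rfl
        push_cast
        omega
      have hyHb : hbZ k r j x ≤ (y : ℤ) := le_trans hbmono hHle
      have hyR1 : x + x % 2 ≤ y := by omega
      have hym : mval k r j x ≤ y := by
        rw [mval]
        have h1 : (hbZ k r j x).toNat ≤ y := by omega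
        omega
      rw [stepf]
      split_ifs with hc
      · -- bump case : show y ≥ m + 1
        obtain ⟨hc1, hc2⟩ := hc
        rcases Nat.lt_or_ge (mval k r j x) y with h | h
        · omega
        · exfalso
          have hym' : y = mval k r j x := by omega
          have heqchain : (y : ℤ) = (z : ℤ) + rr k r (j+1) - rr k r j
              - (if j = k - 2 then (o : ℤ) else 0) := by
            have : ((mval k r j x : ℕ) : ℤ) = hbZ k r j x := hc1
            omega
          have := hHpar heqchain
          rw [hym'] at this
          omega
      · exact hym
  intro j hj
  exact main (k - 1 - j) j (by omega)

end Canon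

section Build
variable {k : ℕ} {r : Fin k → ℤ}

/-- the rows of the Durfee square of the minimal partition -/
def bQ (k : ℕ) (r : Fin k → ℤ) (j : ℕ) : ℤ :=
  rr k r j + 2*k + ghat k r j - (if j = k-1 then (ohat k r : ℤ) else 0)

def headC (k : ℕ) (r : Fin k → ℤ) : List ℕ := (List.range k).map (fun j => (bQ k r j).toNat)

/-- number of odd parts `2j+1` in the minimal tail -/
def tsf (k : ℕ) (r : Fin k → ℤ) (j : ℕ) : ℕ := ghat k r j % 2

/-- number of even parts `2j+2` in the minimal tail -/
def ttf (k : ℕ) (r : Fin k → ℤ) (j : ℕ) : ℕ := ghat k r j / 2 - (ghat k r (j+1) + 1) / 2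

def tailM (k : ℕ) (r : Fin k → ℤ) : Multiset ℕ :=
  ∑ j ∈ Finset.range k,
    (Multiset.replicate (ttf k r j) (2*j+2) + Multiset.replicate (tsf k r j) (2*j+1))

theorem ghat_ge_k (j : ℕ) (hj : k ≤ j) : ghat k r j = 0 := by
  rw [ghat, if_neg (by omega)]

theorem ttf_eq (hk : 0 < k) (j : ℕ) :
    ttf k r j + (ghat k r (j+1) + 1) / 2 = ghat k r j / 2 := by
  have := ghat_R1' (k := k) (r := r) j hk
  rw [ttf]
  omega

theorem bQ_adj (hj : ∀ j, j + 1 < k →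
    (bQ k r (j+1) ≤ bQ k r j ∧ (bQ k r j = bQ k r (j+1) → bQ k r j % 2 = 0))) : True := trivial

theorem bQ_adj' {j : ℕ} (hjk : j + 1 < k) :
    bQ k r (j+1) ≤ bQ k r j ∧ (bQ k r j = bQ k r (j+1) → bQ k r j % 2 = 0) := by
  obtain ⟨hle, hpar⟩ := ghat_H (k := k) (r := r) hjk
  have hne : j ≠ k - 1 := by omega
  have hiff : (if j + 1 = k - 1 then (ohat k r : ℤ) else 0)
      = (if j = k - 2 then (ohat k r : ℤ) else 0) := by
    by_cases h : j + 1 = k - 1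
    · rw [if_pos h, if_pos (by omega)]
    · rw [if_neg h, if_neg (by omega)]
  rw [hbZ] at hle hpar
  constructor
  · rw [bQ, bQ, if_neg hne, hiff]
    omega
  · intro heq
    rw [bQ, bQ, if_neg hne, hiff] at heq
    have heq2 : (ghat k r j : ℤ) =
        (ghat k r (j+1) : ℤ) + rr k r (j+1) - rr k r j
          - (if j = k - 2 then (ohat k r : ℤ) else 0) := by omega
    have := hpar heq2
    rw [bQ, if_neg hne]
    omega

theorem bQ_mono (hk : 0 < k) : ∀ i j, i ≤ j → j < k → bQ k r j ≤ bQ k r i := by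
  have step : ∀ d i, i + d < k → bQ k r (i + d) ≤ bQ k r i := by
    intro d
    induction d with
    | zero => intro i _; exact le_rfl
    | succ n ih =>
      intro i hi
      have h1 : bQ k r (i + (n+1)) ≤ bQ k r (i + n) := by
        have : (i + n) + 1 < k := by omega
        have := (bQ_adj' (k := k) (r := r) this).1
        have e : i + n + 1 = i + (n + 1) := by omega
        rw [e] at this
        exact this
      exact le_trans h1 (ih i (by omega))
  intro i j hij hj
  have : j = i + (j - i) := by omega
  rw [this]
  exact step (j - i) i (by omega)

theorem bQ_last (hk : 0 < k) :
    2*(k:ℤ)-1 ≤ bQ k r (k-1) ∧ (ohat k r = 1 → bQ k r (k-1) = 2*k-1) ∧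
      (ohat k r = 0 → 2*(k:ℤ) ≤ bQ k r (k-1)) := by
  rcases Nat.eq_zero_or_pos (ohat k r) with h | h
  · have hb := ghat_base (k := k) (r := r) hk
    have : bQ k r (k-1) = rr k r (k-1) + 2*k + ghat k r (k-1) := by
      rw [bQ, if_pos rfl, h]
      push_cast
      ring
    refine ⟨by omega, by omega, fun _ => by omega⟩
  · have h1 : ohat k r = 1 := by have := ohat_le_one (k := k) (r := r); omega
    obtain ⟨hr0, hg0⟩ := ghat_base1 hk h1
    have : bQ k r (k-1) = 2*k-1 := by
      rw [bQ, if_pos rfl, hr0, hg0, h1]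
      push_cast
      ring
    exact ⟨by omega, fun _ => this, by omega⟩

theorem bQ_ge (hk : 0 < k) {j : ℕ} (hj : j < k) : 2*(k:ℤ)-1 ≤ bQ k r j :=
  le_trans (bQ_last hk).1 (bQ_mono hk j (k-1) (by omega) (by omega))

theorem bQ_toNat (hk : 0 < k) {j : ℕ} (hj : j < k) : ((bQ k r j).toNat : ℤ) = bQ k r j := by
  have := bQ_ge (k := k) (r := r) hk hj
  omega

theorem bQ_eq_2k1 (hk : 0 < k) {j : ℕ} (hj : j < k) (he : bQ k r j = 2*(k:ℤ)-1) :
    j = k - 1 ∧ ohat k r = 1 := by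
  have hlast := bQ_last (k := k) (r := r) hk
  have hmono : bQ k r (k-1) ≤ bQ k r j := bQ_mono hk j (k-1) (by omega) (by omega)
  have hk1 : bQ k r (k-1) = 2*(k:ℤ)-1 := by omega
  have ho1 : ohat k r = 1 := by
    rcases Nat.eq_zero_or_pos (ohat k r) with h | h
    · have := hlast.2.2 h; omega
    · have := ohat_le_one (k := k) (r := r); omega
  refine ⟨?_, ho1⟩
  by_contra hne
  have hjlt : j < k - 1 := by omega
  -- then bQ (k-2) is squeezed between bQ j and bQ (k-1), all equal to 2k-1, odd: contradiction
  have h2 : k - 2 + 1 < k := by omega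
  have hsq1 : bQ k r (k-2) ≤ bQ k r j := bQ_mono hk j (k-2) (by omega) (by omega)
  have hsq2 : bQ k r (k-1) ≤ bQ k r (k-2) := by
    have := (bQ_adj' (k := k) (r := r) h2).1
    have e : k - 2 + 1 = k - 1 := by omega
    rw [e] at this
    exact this
  have heq : bQ k r (k-2) = bQ k r (k-1) := by omega
  have hpar := (bQ_adj' (k := k) (r := r) h2).2
  have e : k - 2 + 1 = k - 1 := by omega
  rw [e] at hpar
  have := hpar heq
  omega


theorem headC_length : (headC k r).length = k := by simp [headC]

theorem headC_getD (hk : 0 < k) {j : ℕ} (hj : j < k) :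
    (headC k r).getD j 0 = (bQ k r j).toNat := by
  rw [List.getD_eq_getElem _ _ (by rw [headC_length]; omega)]
  simp [headC]

theorem headC_mem (hk : 0 < k) {x : ℕ} (hx : x ∈ headC k r) : 2*k - 1 ≤ x := by
  rw [headC, List.mem_map] at hx
  obtain ⟨j, hj, rfl⟩ := hx
  rw [List.mem_range] at hj
  have := bQ_ge (k := k) (r := r) hk hj
  omega

theorem countP_range_eq_card (p : ℕ → Bool) (n : ℕ) :
    (List.range n).countP p = ((Finset.range n).filter (fun i => p i = true)).card := by
  induction n with
  | zero => simp
  | succ m ih =>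
    rw [List.range_succ, List.countP_append, Finset.range_add_one, Finset.filter_insert]
    by_cases h : p m = true
    · rw [if_pos h, Finset.card_insert_of_notMem (by simp), ← ih]
      simp [h]
    · rw [if_neg h, ← ih]
      simp [h]

theorem headC_count_odd (hk : 0 < k) {v : ℕ} (hv : v % 2 = 1) : (headC k r).count v ≤ 1 := by
  rw [headC, List.count_eq_countP, List.countP_map]
  have : ((fun a => a == v) ∘ fun j => (bQ k r j).toNat) =
      fun j => ((bQ k r j).toNat == v) := rfl
  rw [this, countP_range_eq_card]
  rw [Finset.card_le_one]
  intro a ha b hb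
  simp only [Finset.mem_filter, Finset.mem_range, beq_iff_eq] at ha hb
  by_contra hne
  -- wlog a < b; both have bQ = v odd; then adjacent pair between them equal & odd
  have key : ∀ i j, i < j → j < k → (bQ k r i).toNat = v → (bQ k r j).toNat = v → False := by
    intro i j hij hjk hi hj
    have hgei := bQ_ge (k := k) (r := r) hk (show i < k by omega)
    have hgej := bQ_ge (k := k) (r := r) hk hjk
    have hbi : bQ k r i = v := by omega
    have hbj : bQ k r j = v := by omega
    have hsq1 : bQ k r (i+1) ≤ bQ k r i := (bQ_adj' (show i + 1 < k by omega)).1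
    have hsq2 : bQ k r j ≤ bQ k r (i+1) := bQ_mono hk (i+1) j (by omega) hjk
    have heq : bQ k r i = bQ k r (i+1) := by omega
    have := (bQ_adj' (show i + 1 < k by omega)).2 heq
    omega
  rcases Nat.lt_or_ge a b with h | h
  · exact key a b h hb.1 ha.2 hb.2
  · exact key b a (by omega) ha.1 hb.2 ha.2

theorem headC_count_2k1 (hk : 0 < k) : (headC k r).count (2*k-1) = ohat k r := by
  rcases Nat.eq_zero_or_pos (ohat k r) with h | h
  · rw [h, List.count_eq_zero]
    intro hmem
    rw [headC, List.mem_map] at hmem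
    obtain ⟨j, hj, hje⟩ := hmem
    rw [List.mem_range] at hj
    have hge := bQ_ge (k := k) (r := r) hk hj
    have : bQ k r j = 2*(k:ℤ)-1 := by omega
    have := (bQ_eq_2k1 hk hj this).2
    omega
  · have h1 : ohat k r = 1 := by have := ohat_le_one (k := k) (r := r); omega
    have hmem : (2*k-1) ∈ headC k r := by
      rw [headC, List.mem_map]
      refine ⟨k-1, List.mem_range.mpr (by omega), ?_⟩
      have := (bQ_last (k := k) (r := r) hk).2.1 h1
      omega
    have hle := headC_count_odd (k := k) (r := r) hk (show (2*k-1) % 2 = 1 by omega)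
    have := List.count_pos_iff.mpr hmem
    omega

theorem headC_sorted : (headC k r).Pairwise (· ≥ ·) := by
  rcases Nat.eq_zero_or_pos k with hk | hk
  · subst hk; simp [headC]
  · rw [headC, List.pairwise_map]
    apply List.Pairwise.imp_of_mem (R := (· < ·))
    · intro a b ha hb hab
      rw [List.mem_range] at ha hb
      have := bQ_mono (k := k) (r := r) hk a b (by omega) hb
      have h1 := bQ_ge (k := k) (r := r) hk ha
      have h2 := bQ_ge (k := k) (r := r) hk hb
      omega
    · exact List.pairwise_lt_range (n := k)

-- tail membership
theorem tailM_mem (hk : 0 < k) {x : ℕ} (hx : x ∈ tailM k r) :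
    1 ≤ x ∧ x ≤ 2*k ∧ (ohat k r = 1 → x ≤ 2*k-2) := by
  rw [tailM] at hx
  rw [Multiset.mem_sum] at hx
  obtain ⟨j, hj, hxj⟩ := hx
  rw [Finset.mem_range] at hj
  rw [Multiset.mem_add] at hxj
  have hcase : (x = 2*j+2 ∧ 0 < ttf k r j) ∨ (x = 2*j+1 ∧ 0 < tsf k r j) := by
    rcases hxj with h | h
    · left
      have := Multiset.eq_of_mem_replicate h
      refine ⟨this, ?_⟩
      by_contra h0
      have : ttf k r j = 0 := by omega
      rw [this] at h
      simp at h
    · right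
      have := Multiset.eq_of_mem_replicate h
      refine ⟨this, ?_⟩
      by_contra h0
      have : tsf k r j = 0 := by omega
      rw [this] at h
      simp at h
  have hbound : x ≤ 2*k := by rcases hcase with ⟨rfl, _⟩ | ⟨rfl, _⟩ <;> omega
  have hpos : 1 ≤ x := by rcases hcase with ⟨rfl, _⟩ | ⟨rfl, _⟩ <;> omega
  refine ⟨hpos, hbound, ?_⟩
  intro ho1
  have hg0 := (ghat_base1 hk ho1).2
  have hts : tsf k r (k-1) = 0 := by rw [tsf, hg0]
  have htt : ttf k r (k-1) = 0 := by
    rw [ttf, hg0]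
    simp
  -- so j ≠ k-1
  have hjne : j ≠ k - 1 := by
    intro hje
    subst hje
    rcases hcase with ⟨_, h⟩ | ⟨_, h⟩ <;> omega
  rcases hcase with ⟨rfl, _⟩ | ⟨rfl, _⟩ <;> omega

theorem tailM_count_odd (hk : 0 < k) {c : ℕ} (hc : c < k) :
    (tailM k r).count (2*c+1) = tsf k r c := by
  rw [tailM, Multiset.count_sum']
  rw [Finset.sum_eq_single c]
  · rw [Multiset.count_add, Multiset.count_replicate, Multiset.count_replicate]
    rw [if_neg (by omega), if_pos rfl]
    omega
  · intro b _ hbc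
    rw [Multiset.count_add, Multiset.count_replicate, Multiset.count_replicate]
    rw [if_neg (by omega), if_neg (by omega)]
    omega
  · intro h
    exact absurd (Finset.mem_range.mpr hc) h

theorem tailM_count_even (hk : 0 < k) {c : ℕ} (hc : c < k) :
    (tailM k r).count (2*c+2) = ttf k r c := by
  rw [tailM, Multiset.count_sum']
  rw [Finset.sum_eq_single c]
  · rw [Multiset.count_add, Multiset.count_replicate, Multiset.count_replicate]
    rw [if_pos rfl, if_neg (by omega)]
    omega
  · intro b _ hbc
    rw [Multiset.count_add, Multiset.count_replicate, Multiset.count_replicate]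
    rw [if_neg (by omega), if_neg (by omega)]
    omega
  · intro h
    exact absurd (Finset.mem_range.mpr hc) h


/-- multiset version of `mcolSize` -/
def mcolM (s : Multiset ℕ) (c : ℕ) : ℕ :=
  (s.map (fun x => if 2*c ≤ x then 2 else if x = 2*c-1 then 1 else 0)).sum

theorem mcolM_coe (l : List ℕ) (c : ℕ) : mcolM (↑l) c = mcolSize l c := by
  simp [mcolM, mcolSize]

theorem mcolM_add (s t : Multiset ℕ) (c : ℕ) : mcolM (s + t) c = mcolM s c + mcolM t c := by
  simp [mcolM]

theorem mcolM_finsum {ι : Type*} (s : Finset ι) (f : ι → Multiset ℕ) (c : ℕ) :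
    mcolM (∑ j ∈ s, f j) c = ∑ j ∈ s, mcolM (f j) c := by
  induction s using Finset.cons_induction with
  | empty => simp [mcolM]
  | cons a s ha ih =>
    rw [Finset.sum_cons, Finset.sum_cons, mcolM_add, ih]

theorem mcolM_replicate (n v c : ℕ) :
    mcolM (Multiset.replicate n v) c = n * (if 2*c ≤ v then 2 else if v = 2*c-1 then 1 else 0) := by
  simp [mcolM, Multiset.map_replicate]

theorem tailM_colS (hk : 0 < k) (c : ℕ) :
    mcolM (tailM k r) (c+1) = ∑ j ∈ Finset.range k,
      (ttf k r j * (if c ≤ j then 2 else 0) +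
       tsf k r j * (if c+1 ≤ j then 2 else if j = c then 1 else 0)) := by
  rw [tailM, mcolM_finsum]
  apply Finset.sum_congr rfl
  intro j _
  rw [mcolM_add, mcolM_replicate, mcolM_replicate]
  congr 1
  · congr 1
    split_ifs <;> omega
  · congr 1
    split_ifs <;> omega

theorem tailM_col (hk : 0 < k) : ∀ d c, c + d = k - 1 → mcolM (tailM k r) (c+1) = ghat k r c := by
  intro d
  induction d with
  | zero =>
    intro c hc
    have hck : c = k - 1 := by omega
    subst hck
    rw [tailM_colS hk]
    rw [Finset.sum_eq_single (k-1)]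
    · rw [if_pos (le_refl (k-1)), if_neg (by omega), if_pos rfl]
      have hg : ghat k r (k-1+1) = 0 := by rw [ghat, if_neg (by omega)]
      rw [ttf, tsf, hg]
      omega
    · intro b hb hbne
      rw [Finset.mem_range] at hb
      rw [if_neg (by omega), if_neg (by omega), if_neg (by omega)]
      omega
    · intro h
      exact absurd (Finset.mem_range.mpr (by omega)) h
  | succ n ih =>
    intro c hc
    have hcc : c + 1 < k := by omega
    have hih := ih (c+1) (by omega)
    rw [tailM_colS hk]
    have hsplit : ∀ j ∈ Finset.range k,
        (ttf k r j * (if c ≤ j then 2 else 0) +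
         tsf k r j * (if c+1 ≤ j then 2 else if j = c then 1 else 0)) =
        (ttf k r j * (if c+1 ≤ j then 2 else 0) +
         tsf k r j * (if c+2 ≤ j then 2 else if j = c+1 then 1 else 0)) +
        ((if j = c then 2 * ttf k r c + tsf k r c else 0) +
         (if j = c + 1 then tsf k r (c+1) else 0)) := by
      intro j _
      by_cases h1 : j = c
      · subst h1
        split_ifs <;> omega
      · by_cases h2 : j = c + 1
        · subst h2
          split_ifs <;> omega
        · split_ifs <;> omega
    rw [Finset.sum_congr rfl hsplit, Finset.sum_add_distrib, ← tailM_colS hk, hih,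
      Finset.sum_add_distrib]
    rw [Finset.sum_ite_eq' (Finset.range k) c, Finset.sum_ite_eq' (Finset.range k) (c+1)]
    rw [if_pos (Finset.mem_range.mpr (by omega)), if_pos (Finset.mem_range.mpr (by omega))]
    have htt := ttf_eq (k := k) (r := r) hk c
    rw [tsf, tsf]
    omega

-- counts of the canonical tail agree with the formulas
theorem tailM_count_odd' (hk : 0 < k) {c : ℕ} (hc : c < k) :
    (tailM k r).count (2*c+1) = ghat k r c % 2 := tailM_count_odd hk hc

theorem tailM_count_even' (hk : 0 < k) {c : ℕ} (hc : c < k) :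
    (tailM k r).count (2*c+2) + (ghat k r (c+1) + 1) / 2 = ghat k r c / 2 := by
  rw [tailM_count_even hk hc]
  exact ttf_eq hk c

theorem tailM_count_zero (hk : 0 < k) {v : ℕ} (hv : v = 0 ∨ 2*k < v) :
    (tailM k r).count v = 0 := by
  rw [Multiset.count_eq_zero]
  intro hmem
  have := tailM_mem hk hmem
  omega


def tailC (k : ℕ) (r : Fin k → ℤ) : List ℕ := Multiset.sort (tailM k r) (· ≥ ·)

def canonL (k : ℕ) (r : Fin k → ℤ) : List ℕ := headC k r ++ tailC k r

theorem tailC_coe : (↑(tailC k r) : Multiset ℕ) = tailM k r := Multiset.sort_eq _ _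

theorem tailC_sorted : (tailC k r).Pairwise (· ≥ ·) := Multiset.pairwise_sort _ _

theorem tailC_count (v : ℕ) : (tailC k r).count v = (tailM k r).count v := by
  rw [← Multiset.coe_count, tailC_coe]

theorem tailC_mem {x : ℕ} : x ∈ tailC k r ↔ x ∈ tailM k r := by
  rw [← Multiset.mem_coe, tailC_coe]

theorem tailC_col (c : ℕ) : mcolSize (tailC k r) c = mcolM (tailM k r) c := by
  rw [← mcolM_coe, tailC_coe]

theorem headC_mem' (hk : 0 < k) (ho : ohat k r = 0) {x : ℕ} (hx : x ∈ headC k r) :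
    2*k ≤ x := by
  rw [headC, List.mem_map] at hx
  obtain ⟨j, hj, rfl⟩ := hx
  rw [List.mem_range] at hj
  have h1 := bQ_mono (k := k) (r := r) hk j (k-1) (by omega) (by omega)
  have h2 := (bQ_last (k := k) (r := r) hk).2.2 ho
  omega

theorem canonL_take : (canonL k r).take k = headC k r :=
  List.take_left' headC_length

theorem canonL_drop : (canonL k r).drop k = tailC k r :=
  List.drop_left' headC_length

theorem canonL_sorted (hk : 0 < k) : (canonL k r).Pairwise (· ≥ ·) := by
  rw [canonL, List.pairwise_append]
  refine ⟨headC_sorted, tailC_sorted, ?_⟩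
  intro x hx y hy
  have hytm := tailM_mem hk (tailC_mem.mp hy)
  rcases Nat.eq_zero_or_pos (ohat k r) with h | h
  · have := headC_mem' hk h hx
    omega
  · have h1 : ohat k r = 1 := by have := ohat_le_one (k := k) (r := r); omega
    have := headC_mem hk hx
    have := hytm.2.2 h1
    omega

theorem canonL_pos (hk : 0 < k) {x : ℕ} (hx : x ∈ canonL k r) : 0 < x := by
  rw [canonL, List.mem_append] at hx
  rcases hx with h | h
  · have := headC_mem hk h; omega
  · have := tailM_mem hk (tailC_mem.mp h); omega

theorem canonL_odd (hk : 0 < k) {v : ℕ} (hv : v % 2 = 1) : (canonL k r).count v ≤ 1 := by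
  rw [canonL, List.count_append]
  have h1 := headC_count_odd (k := k) (r := r) hk hv
  have h2 : (tailC k r).count v ≤ 1 := by
    rw [tailC_count]
    rcases Nat.lt_or_ge (2*k) v with h | h
    · rw [tailM_count_zero hk (Or.inr h)]
      omega
    · have hc : v = 2 * ((v-1)/2) + 1 := by omega
      have hck : (v-1)/2 < k := by omega
      rw [hc, tailM_count_odd hk hck, tsf]
      omega
  have h3 : ¬ (0 < (headC k r).count v ∧ 0 < (tailC k r).count v) := by
    rintro ⟨ha, hb⟩
    have hmemh : v ∈ headC k r := List.count_pos_iff.mp ha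
    have hmemt : v ∈ tailC k r := List.count_pos_iff.mp hb
    have hvh := headC_mem hk hmemh
    have hvt := tailM_mem hk (tailC_mem.mp hmemt)
    have hv2k1 : v = 2*k-1 := by omega
    -- v = 2k-1 in head means ohat = 1
    have hcnt : (headC k r).count (2*k-1) = ohat k r := headC_count_2k1 hk
    rw [← hv2k1] at hcnt
    have ho1 : ohat k r = 1 := by
      have := ohat_le_one (k := k) (r := r)
      omega
    have := hvt.2.2 ho1
    omega
  omega

theorem canonL_getD_lt (hk : 0 < k) {j : ℕ} (hj : j < k) :
    (canonL k r).getD j 0 = (bQ k r j).toNat := by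
  rw [canonL, List.getD_append _ _ _ _ (by rw [headC_length]; omega)]
  exact headC_getD hk hj

theorem canonL_mdurfee (hk : 0 < k) : mdurfee (canonL k r) = k := by
  apply mdurfee_eq
  · rw [canonL, List.length_append, headC_length]; omega
  · intro j hj
    rw [canonL_getD_lt hk hj]
    have := bQ_ge (k := k) (r := r) hk hj
    omega
  · have hda : (canonL k r).getD k 0 = (tailC k r).getD 0 0 := by
      rw [canonL, List.getD_append_right _ _ _ _ (by rw [headC_length])]
      rw [headC_length]
      simp
    rw [hda]
    cases htl : tailC k r with
    | nil => simp
    | cons a t =>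
      have ha : a ∈ tailC k r := by rw [htl]; exact List.mem_cons_self
      have := tailM_mem hk (tailC_mem.mp ha)
      simp only [List.getD_cons_zero]
      omega
  · exact canonL_sorted hk

theorem canonL_gfun (hk : 0 < k) {c : ℕ} (hc : c < k) : gfun (canonL k r) k c = ghat k r c := by
  rw [gfun, canonL_drop, tailC_col]
  exact tailM_col hk (k - 1 - c) c (by omega)

theorem canonL_ofun (hk : 0 < k) : ofun (canonL k r) k = ohat k r := by
  rw [ofun, canonL_take]
  exact headC_count_2k1 hk

theorem canonL_mrank (hk : 0 < k) {j : ℕ} (hj : j < k) :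
    mrank (canonL k r) j = rr k r j := by
  have hcol : mcolSize (canonL k r) (j+1) + (if j = k-1 then ohat k r else 0)
      = 2 * k + ghat k r j := by
    have hsplit : mcolSize (canonL k r) (j+1)
        = mcolSize (headC k r) (j+1) + mcolSize (tailC k r) (j+1) := by
      rw [canonL, mcolSize_append]
    have htc : mcolSize (tailC k r) (j+1) = ghat k r j := by
      rw [tailC_col]
      exact tailM_col hk (k - 1 - j) j (by omega)
    have hmem : ∀ x ∈ headC k r, 2*k - 1 ≤ x := fun x hx => headC_mem hk hx
    by_cases hjk : j = k - 1
    · have hkk : j + 1 = k := by omega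
      have hhd := mcolSize_head_k (l := headC k r) (k := k) hk hmem
      rw [headC_length, headC_count_2k1 hk] at hhd
      have e1 : mcolSize (headC k r) (j+1) = mcolSize (headC k r) k := by rw [hkk]
      rw [hsplit, if_pos hjk, e1, htc]
      omega
    · have h1 : mcolSize (headC k r) (j+1) = 2 * (headC k r).length :=
        mcolSize_head_lt (by omega) (by omega) hmem
      rw [hsplit, if_neg hjk, h1, headC_length, htc]
      omega
  rw [mrank, canonL_getD_lt hk hj]
  have hbt := bQ_toNat (k := k) (r := r) hk hj
  rw [bQ] at hbt
  by_cases hjk : j = k - 1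
  · rw [if_pos hjk] at hbt hcol
    rw [bQ, if_pos hjk]
    omega
  · rw [if_neg hjk] at hbt hcol
    rw [bQ, if_neg hjk]
    omega

theorem canonL_mranks (hk : 0 < k) : mranks (canonL k r) = List.ofFn r := by
  rw [mranks, canonL_mdurfee hk]
  apply List.ext_getElem
  · simp
  · intro j h1 h2
    simp only [List.getElem_map, List.getElem_range, List.getElem_ofFn]
    have hj : j < k := by simpa using h1
    rw [canonL_mrank hk hj, rr, dif_pos hj]


theorem mranks_elim {L : List ℕ} (h : mranks L = List.ofFn r) :
    mdurfee L = k ∧ ∀ j, j < k → mrank L j = rr k r j := by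
  have hlen : mdurfee L = k := by
    have := congrArg List.length h
    simpa [mranks] using this
  refine ⟨hlen, fun j hj => ?_⟩
  have hj2 : j < (mranks L).length := by simp [mranks, hlen]; omega
  have h1 := List.getElem_of_eq h hj2
  simp only [mranks, List.getElem_map, List.getElem_range, List.getElem_ofFn] at h1
  rw [rr, dif_pos hj]
  exact h1

theorem pointwise_applied {L : List ℕ} (hk : 0 < k)
    (hs : L.Pairwise (· ≥ ·)) (hpos : ∀ x ∈ L, 0 < x)
    (hodd : ∀ x, x % 2 = 1 → L.count x ≤ 1)
    (hdur : mdurfee L = k) (hrk : ∀ j, j < k → mrank L j = rr k r j) :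
    ∀ j, j < k → ghat k r j ≤ gfun L k j := by
  apply pointwise hk (gfun L k) (ofun L k)
  · exact F_o01 hodd hk
  · exact fun h => F_o1 hs hdur hk hodd hrk h
  · exact fun h => F_o0 hs hdur hk hrk h
  · intro j hj
    exact F_H hs hdur hk hodd hrk hj
  · intro j hj
    exact F_R1 hodd

theorem o_eq_ohat_of_one {L : List ℕ} (hk : 0 < k)
    (hs : L.Pairwise (· ≥ ·)) (hodd : ∀ x, x % 2 = 1 → L.count x ≤ 1)
    (hdur : mdurfee L = k) (hrk : ∀ j, j < k → mrank L j = rr k r j)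
    (ho : ofun L k = 1) : ohat k r = 1 := by
  have := (F_o1 hs hdur hk hodd hrk ho).1
  rw [ohat, if_pos this]

theorem canon_sum (hk : 0 < k) :
    ((canonL k r).sum : ℤ) = (∑ j ∈ Finset.range k, rr k r j) + 2*k*k - ohat k r
      + 2 * (∑ c ∈ Finset.range k, (ghat k r c : ℕ)) := by
  have hs := canonL_sorted (k := k) (r := r) hk
  have hdur := canonL_mdurfee (k := k) (r := r) hk
  have hpos : ∀ x ∈ canonL k r, 0 < x := fun x hx => canonL_pos hk hx
  have hrk : ∀ j, j < k → mrank (canonL k r) j = rr k r j := fun j hj => canonL_mrank hk hj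
  have h1 := F_sum hs hdur hk hpos hrk
  have h2 := F_sumg hs hdur hpos
  have h3 : ∑ c ∈ Finset.range k, gfun (canonL k r) k c = ∑ c ∈ Finset.range k, ghat k r c :=
    Finset.sum_congr rfl (fun c hc => canonL_gfun hk (Finset.mem_range.mp hc))
  rw [h1, canonL_ofun hk, h2, h3]

theorem sum_ge {L : List ℕ} (hk : 0 < k)
    (hs : L.Pairwise (· ≥ ·)) (hpos : ∀ x ∈ L, 0 < x)
    (hodd : ∀ x, x % 2 = 1 → L.count x ≤ 1)
    (hranks : mranks L = List.ofFn r) :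
    (canonL k r).sum ≤ L.sum ∧ (L.sum = (canonL k r).sum →
      (ofun L k = ohat k r ∧ ∀ c, c < k → gfun L k c = ghat k r c)) := by
  obtain ⟨hdur, hrk⟩ := mranks_elim (k := k) (r := r) hranks
  have hpw := pointwise_applied hk hs hpos hodd hdur hrk
  have hsum1 := F_sum hs hdur hk hpos hrk
  have hsum2 := F_sumg hs hdur hpos
  have hcan := canon_sum (k := k) (r := r) hk
  have hsums : ∑ c ∈ Finset.range k, ghat k r c ≤ ∑ c ∈ Finset.range k, gfun L k c :=
    Finset.sum_le_sum (fun c hc => hpw c (Finset.mem_range.mp hc))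
  have ho01 := F_o01 (L := L) (k := k) hodd hk
  have hohat01 := ohat_le_one (k := k) (r := r)
  have hocase : ofun L k = ohat k r ∨ (ofun L k = 0 ∧ ohat k r = 1) := by
    rcases Nat.eq_zero_or_pos (ofun L k) with h | h
    · rcases Nat.eq_zero_or_pos (ohat k r) with h2 | h2
      · left; omega
      · right; omega
    · left
      have h1 : ofun L k = 1 := by omega
      rw [h1, o_eq_ohat_of_one hk hs hodd hdur hrk h1]
  rw [hsum2] at hsum1
  constructor
  · have : ((canonL k r).sum : ℤ) ≤ (L.sum : ℤ) := by
      rcases hocase with h | ⟨h0, h1⟩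
      · rw [hcan, hsum1, h]
        have : ((∑ c ∈ Finset.range k, ghat k r c : ℕ) : ℤ)
            ≤ ((∑ c ∈ Finset.range k, gfun L k c : ℕ) : ℤ) := by exact_mod_cast hsums
        omega
      · rw [hcan, hsum1, h0, h1]
        have : ((∑ c ∈ Finset.range k, ghat k r c : ℕ) : ℤ)
            ≤ ((∑ c ∈ Finset.range k, gfun L k c : ℕ) : ℤ) := by exact_mod_cast hsums
        omega
    exact_mod_cast this
  · intro heq
    have heqz : (L.sum : ℤ) = ((canonL k r).sum : ℤ) := by exact_mod_cast heq
    rw [hcan, hsum1] at heqz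
    have hcast : ((∑ c ∈ Finset.range k, ghat k r c : ℕ) : ℤ)
        ≤ ((∑ c ∈ Finset.range k, gfun L k c : ℕ) : ℤ) := by exact_mod_cast hsums
    have hoeq : ofun L k = ohat k r := by omega
    have hsumeq : ∑ c ∈ Finset.range k, gfun L k c = ∑ c ∈ Finset.range k, ghat k r c := by
      omega
    refine ⟨hoeq, ?_⟩
    intro c hc
    by_contra hne
    have hlt : ghat k r c < gfun L k c := by
      have := hpw c hc
      omega
    have : ∑ c ∈ Finset.range k, ghat k r c < ∑ c ∈ Finset.range k, gfun L k c := by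
      apply Finset.sum_lt_sum (fun i hi => hpw i (Finset.mem_range.mp hi))
      exact ⟨c, Finset.mem_range.mpr hc, hlt⟩
    omega

theorem eq_canon {L : List ℕ} (hk : 0 < k)
    (hs : L.Pairwise (· ≥ ·)) (hpos : ∀ x ∈ L, 0 < x)
    (hodd : ∀ x, x % 2 = 1 → L.count x ≤ 1)
    (hranks : mranks L = List.ofFn r)
    (hsum : L.sum = (canonL k r).sum) : L = canonL k r := by
  obtain ⟨hdur, hrk⟩ := mranks_elim (k := k) (r := r) hranks
  obtain ⟨hoeq, hgeq⟩ := (sum_ge hk hs hpos hodd hranks).2 hsum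
  have hlen := mdurfee_le_length L
  rw [hdur] at hlen
  -- tails are equal
  have htail : L.drop k = tailC k r := by
    have hperm : (L.drop k).Perm (tailC k r) := by
      rw [List.perm_iff_count]
      intro v
      rw [tailC_count]
      rcases Nat.eq_zero_or_pos v with hv0 | hv1
      · subst hv0
        rw [tailM_count_zero hk (Or.inl rfl), List.count_eq_zero]
        intro hmem
        exact absurd (hpos 0 (List.mem_of_mem_drop hmem)) (by omega)
      · rcases Nat.lt_or_ge (2*k) v with hbig | hsmall
        · rw [tailM_count_zero hk (Or.inr hbig), List.count_eq_zero]
          intro hmem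
          have := mem_drop_le hs hdur hmem
          omega
        · rcases Nat.even_or_odd v with he | ho
          · -- v = 2c+2 with c < k
            have hc : v = 2 * ((v-2)/2) + 2 := by
              obtain ⟨t, ht⟩ := he
              omega
            have hck : (v-2)/2 < k := by omega
            rw [hc, tailM_count_even hk hck]
            have h1 := (F_counts (L := L) (k := k) hodd (c := (v-2)/2)).2
            have h2 := ttf_eq (k := k) (r := r) hk ((v-2)/2)
            have hg1 : gfun L k ((v-2)/2) = ghat k r ((v-2)/2) := hgeq _ hck
            have hg2 : gfun L k ((v-2)/2 + 1) = ghat k r ((v-2)/2 + 1) := by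
              rcases Nat.lt_or_ge ((v-2)/2 + 1) k with h | h
              · exact hgeq _ h
              · rw [F_gk hs hdur h, ghat_ge_k _ h]
            omega
          · have hc : v = 2 * ((v-1)/2) + 1 := by
              obtain ⟨t, ht⟩ := ho
              omega
            have hck : (v-1)/2 < k := by omega
            rw [hc, tailM_count_odd hk hck]
            have h1 := (F_counts (L := L) (k := k) hodd (c := (v-1)/2)).1
            have hg1 : gfun L k ((v-1)/2) = ghat k r ((v-1)/2) := hgeq _ hck
            rw [h1, hg1, tsf]
    exact List.Perm.eq_of_pairwise'
      (List.Pairwise.sublist (List.drop_sublist k L) hs) tailC_sorted hperm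
  -- heads are equal
  have hhead : L.take k = headC k r := by
    apply List.ext_getElem
    · rw [length_take_k hdur, headC_length]
    · intro j h1 h2
      have hj : j < k := by rw [length_take_k hdur] at h1; exact h1
      have hb := F_beq hs hdur hk hrk hj
      rw [hoeq, hgeq j hj] at hb
      have hbq : (L.getD j 0 : ℤ) = bQ k r j := by
        rw [bQ]
        by_cases hjk : j = k - 1
        · rw [if_pos hjk] at hb ⊢; omega
        · rw [if_neg hjk] at hb ⊢; omega
      have hLj : L.getD j 0 = (bQ k r j).toNat := by omega
      have e1 : (L.take k)[j] = L.getD j 0 := by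
        rw [← getD_take hlen hj, List.getD_eq_getElem _ _ h1]
      have e2 : (headC k r)[j] = (bQ k r j).toNat := by
        rw [← headC_getD (k := k) (r := r) hk hj, List.getD_eq_getElem _ _ h2]
      rw [e1, e2, hLj]
  calc L = L.take k ++ L.drop k := (List.take_append_drop k L).symm
    _ = headC k r ++ tailC k r := by rw [htail, hhead]
    _ = canonL k r := rfl

end Build

section Final
variable {k : ℕ} {r : Fin k → ℤ}

theorem sparts_coe {n : ℕ} (π : n.Partition) : (↑(sparts π) : Multiset ℕ) = π.parts :=
  Multiset.sort_eq _ _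

theorem sparts_sorted {n : ℕ} (π : n.Partition) : (sparts π).Pairwise (· ≥ ·) :=
  Multiset.pairwise_sort _ _

theorem sparts_sum {n : ℕ} (π : n.Partition) : (sparts π).sum = n := by
  have h := congrArg Multiset.sum (sparts_coe π)
  rw [Multiset.sum_coe] at h
  rw [h, π.parts_sum]

theorem sparts_pos {n : ℕ} (π : n.Partition) : ∀ x ∈ sparts π, 0 < x := by
  intro x hx
  exact π.parts_pos ((Multiset.mem_sort _).mp hx)

theorem sparts_count {n : ℕ} (π : n.Partition) (x : ℕ) :
    (sparts π).count x = π.parts.count x := by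
  rw [← Multiset.coe_count, sparts_coe]

theorem sparts_odd {n : ℕ} {π : n.Partition} (hpod : Pod π) :
    ∀ x, x % 2 = 1 → (sparts π).count x ≤ 1 := by
  intro x hx
  rw [sparts_count]
  exact hpod x (Nat.odd_iff.mpr hx)

theorem statement15' (k : ℕ) (hk : 0 < k) (r : Fin k → ℤ) :
    ∃! p : (n : ℕ) × Nat.Partition n,
      Pod p.2 ∧ mdurfee (sparts p.2) = k ∧ mranks (sparts p.2) = List.ofFn r ∧
        ∀ (m : ℕ) (μ' : m.Partition), Pod μ' → mranks (sparts μ') = List.ofFn r →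
          p.1 ≤ m := by
  set N := (canonL k r).sum with hN
  have hPsum : ((canonL k r : Multiset ℕ)).sum = N := by rw [Multiset.sum_coe]
  set P : Nat.Partition N := ⟨(↑(canonL k r) : Multiset ℕ),
    fun {x} hx => canonL_pos hk (Multiset.mem_coe.mp hx), hPsum⟩ with hP
  have hspP : sparts P = canonL k r := by
    apply List.Perm.eq_of_pairwise' (sparts_sorted P) (canonL_sorted hk)
    rw [← Multiset.coe_eq_coe, sparts_coe]
  have hPod : Pod P := by
    intro x hx
    show Multiset.count x (↑(canonL k r) : Multiset ℕ) ≤ 1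
    rw [Multiset.coe_count]
    exact canonL_odd hk (Nat.odd_iff.mp hx)
  have hranksP : mranks (sparts P) = List.ofFn r := by rw [hspP]; exact canonL_mranks hk
  have hminP : ∀ (m : ℕ) (μ' : m.Partition), Pod μ' → mranks (sparts μ') = List.ofFn r →
      N ≤ m := by
    intro m μ' hpod' hranks'
    have h1 := (sum_ge (k := k) (r := r) hk (sparts_sorted μ') (sparts_pos μ')
      (sparts_odd hpod') hranks').1
    rw [sparts_sum] at h1
    exact h1
  refine ⟨⟨N, P⟩, ⟨hPod, by rw [hspP]; exact canonL_mdurfee hk, hranksP, hminP⟩, ?_⟩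
  rintro ⟨m, μ⟩ ⟨hpod, hdur, hranks, hmin⟩
  have hm1 : m ≤ N := hmin N P hPod hranksP
  have hm2 : N ≤ m := by
    have h1 := (sum_ge (k := k) (r := r) hk (sparts_sorted μ) (sparts_pos μ)
      (sparts_odd hpod) hranks).1
    rw [sparts_sum] at h1
    exact h1
  have hm : m = N := le_antisymm hm1 hm2
  subst hm
  have hsp : sparts μ = canonL k r := by
    apply eq_canon hk (sparts_sorted μ) (sparts_pos μ) (sparts_odd hpod) hranks
    rw [sparts_sum]
  have hparts : μ.parts = P.parts := by
    rw [← sparts_coe μ, hsp]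
  have : μ = P := Nat.Partition.ext hparts
  rw [this]

end Final

end Aux15

theorem statement15 (k : ℕ) (hk : 0 < k) (r : Fin k → ℤ) :
    ∃! p : (n : ℕ) × Nat.Partition n,
      Pod p.2 ∧ mdurfee (sparts p.2) = k ∧ mranks (sparts p.2) = List.ofFn r ∧
        ∀ (m : ℕ) (μ' : m.Partition), Pod μ' → mranks (sparts μ') = List.ofFn r →
          p.1 ≤ m :=
  statement15' k hk r

end BasisPartitions
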